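/- Let (S,w) be a hereditary 2-3-Set Packing instance with solutions A and B as above (A ∩ B = ∅, no local improvement of A of size ≤ 10). For each U ⊆ A there exists a collection X ⊆ S of pairwise disjoint sets such that: (i) N(X,A) ⊆ U and every set in X intersects a set of U, hence |X| ≤ 3|U|; (ii) there exists an injective map f: X → B_1 ∪ B_2 with x ⊆ f(x) for all x ∈ X; (iii) w(X) equals the total amount of weight that U receives in the first weight-distribution step. -/

import Mathlib

open scoped Classical

namespace SetPacking

variable {α : Type*}

/-- Weight of a set: `|s| - 1` (so 1 for 2-element sets and 2 for 3-element sets). -/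
noncomputable def wt (s : Finset α) : ℕ := s.card - 1

/-- Total weight of a collection of sets. -/
noncomputable def wsum (X : Finset (Finset α)) : ℕ := ∑ s ∈ X, wt s

/-- `N(X, A)`: the sets of `A` intersecting some member of `X` (this includes `X ∩ A`
when the sets involved are nonempty). -/
noncomputable def nbhd (X A : Finset (Finset α)) : Finset (Finset α) :=
  A.filter (fun a => ∃ x ∈ X, (x ∩ a).Nonempty)

/-- A sub-collection consisting of pairwise disjoint sets. -/
def PairwiseDisjointSets (X : Finset (Finset α)) : Prop :=
  ∀ x ∈ X, ∀ y ∈ X, x ≠ y → x ∩ y = ∅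

/-- `X` is a local improvement of `A`: a disjoint sub-collection with
`w(X) > w(N(X, A))`, or equal weight and strictly more weight-2 (i.e. 3-element)
sets in `X` than in `N(X, A)`. -/
def IsLocalImprovement (A X : Finset (Finset α)) : Prop :=
  PairwiseDisjointSets X ∧
    (wsum (nbhd X A) < wsum X ∨
      (wsum X = wsum (nbhd X A) ∧
        ((nbhd X A).filter (fun s => s.card = 3)).card
          < (X.filter (fun s => s.card = 3)).card))

/-- `B₁`: the sets of `B` with exactly one neighbor in `A` (in the conflict graph). -/
noncomputable def B1 (A B : Finset (Finset α)) : Finset (Finset α) :=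
  B.filter (fun v => (A.filter (fun a => (v ∩ a).Nonempty)).card = 1)

/-- `B₂`: the weight-2 sets of `B` with exactly two incident edges in the multigraph
conflict graph (that is, `∑_{a ∈ A} |v ∩ a| = 2`), connecting to two distinct sets
of `A`. -/
noncomputable def B2 (A B : Finset (Finset α)) : Finset (Finset α) :=
  B.filter (fun v => v.card = 3 ∧ (∑ a ∈ A, (v ∩ a).card) = 2 ∧
    (A.filter (fun a => (v ∩ a).Nonempty)).card = 2)

/-- The total amount of weight that `u` receives in the first distribution step:
each `v ∈ B₁` sends its weight `wt v` to its unique neighbor in `A`, and each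
`v ∈ B₂` sends 1 along each of its two edges (one unit to each of its two
distinct neighbors in `A`). -/
noncomputable def received (A B : Finset (Finset α)) (u : Finset α) : ℕ :=
  (∑ v ∈ (B1 A B).filter (fun v => (v ∩ u).Nonempty), wt v) +
    ((B2 A B).filter (fun v => (v ∩ u).Nonempty)).card

/-- `C`: the sets of `A` receiving exactly their own weight in the first step. -/
noncomputable def Cset (A B : Finset (Finset α)) : Finset (Finset α) :=
  A.filter (fun u => received A B u = wt u)

end SetPacking

open SetPacking

/-!
Let `D` be the union of the sets of `A \ U` and take `X = {v \ D : v ∈ B₁ ∪ B₂, v meets U}`.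
Since `A` is a packing, removing `D` does not change how `v` meets the sets of `U`; so every
member of `X` meets `U`, and since `B` is a packing, `v ↦ v \ D` is injective and `X` is a packing
that meets no set of `A \ U`. A set `v ∈ B₁` meeting `U` has its unique `A`-neighbour in `U`, so
`v \ D = v` and `v` sends `w(v)` to `U`. A set `v ∈ B₂` meets each of its two `A`-neighbours in
exactly one point, so `|v \ D| = 1 + #(neighbours of v in U)`: `w(v \ D)` is exactly what `v`
sends to `U`, and `v \ D ∈ S` by heredity. Summing over `v` gives (iii). The bound `|X| ≤ 3|U|`
holds because the disjoint members of `X` each contain a point of `⋃ U`, which has at most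
`3|U|` points.
-/

open Finset

namespace SetPacking

variable {α : Type*}

lemma pairwiseDisjointSets_iff {X : Finset (Finset α)} :
    PairwiseDisjointSets X ↔ (X : Set (Finset α)).PairwiseDisjoint id := by
  simp only [PairwiseDisjointSets, Set.PairwiseDisjoint, Set.Pairwise, mem_coe,
    Function.onFun, id, disjoint_iff_inter_eq_empty]

lemma card_le_card_biUnion_of_forall_inter_nonempty {X U : Finset (Finset α)}
    (hX : (X : Set (Finset α)).PairwiseDisjoint id)
    (hXU : ∀ x ∈ X, ∃ u ∈ U, (x ∩ u).Nonempty) : #X ≤ #(U.biUnion id) := by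
  refine card_le_card_of_forall_subsingleton (fun x t => t ∈ x) (fun x hx => ?_)
    fun t _ x hx y hy => hX.elim_finset hx.1 hy.1 t hx.2 hy.2
  obtain ⟨u, hu, t, ht⟩ := hXU x hx
  rw [mem_inter] at ht
  exact ⟨t, mem_biUnion.2 ⟨u, hu, ht.2⟩, ht.1⟩

lemma exists_injOn_inverse_on_image {β γ : Type*} [Nonempty β] [DecidableEq γ] (g : β → γ)
    (s : Finset β) :
    ∃ f : γ → β, Set.InjOn f ↑(s.image g) ∧ ∀ x ∈ s.image g, f x ∈ s ∧ g (f x) = x := by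
  refine ⟨Function.invFunOn g s, by simpa using Function.invFunOn_injOn_image g (s : Set β),
    fun x hx => ?_⟩
  have hx' : ∃ v ∈ (s : Set β), g v = x := by simpa using hx
  exact ⟨Function.invFunOn_mem hx', Function.invFunOn_eq hx'⟩

lemma mem_of_subset_of_two_le_card {S : Finset (Finset α)}
    (hher : ∀ s ∈ S, s.card = 3 → ∀ t ⊆ s, t.card = 2 → t ∈ S) {s t : Finset α}
    (hs : s ∈ S) (hs3 : #s = 3) (hts : t ⊆ s) (ht : 2 ≤ #t) : t ∈ S := by
  rcases (card_le_card hts).eq_or_lt with h | h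
  · rwa [eq_of_subset_of_card_le hts h.ge]
  · exact hher s hs hs3 t hts (by omega)

noncomputable def neighbors (U : Finset (Finset α)) (v : Finset α) : Finset (Finset α) :=
  U.filter (fun u => (v ∩ u).Nonempty)

lemma mem_neighbors {U : Finset (Finset α)} {v u : Finset α} :
    u ∈ neighbors U v ↔ u ∈ U ∧ (v ∩ u).Nonempty := mem_filter

lemma sum_sum_filter_inter_nonempty (U T : Finset (Finset α)) (f : Finset α → ℕ) :
    ∑ u ∈ U, ∑ v ∈ T.filter (fun v => (v ∩ u).Nonempty), f v =
      ∑ v ∈ T, #(neighbors U v) * f v := by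
  simp_rw [sum_filter]
  rw [sum_comm]
  exact sum_congr rfl fun v _ => by rw [← sum_filter, sum_const, smul_eq_mul, neighbors]

lemma sum_received (A B U : Finset (Finset α)) :
    ∑ u ∈ U, received A B u =
      ∑ v ∈ B1 A B, #(neighbors U v) * wt v + ∑ v ∈ B2 A B, #(neighbors U v) := by
  simp only [received, sum_add_distrib, sum_sum_filter_inter_nonempty]
  congr 1
  simpa using sum_sum_filter_inter_nonempty U (B2 A B) fun _ => 1

section Classes

variable {A B : Finset (Finset α)} {v : Finset α}

lemma mem_B1 : v ∈ B1 A B ↔ v ∈ B ∧ #(neighbors A v) = 1 := mem_filter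

lemma mem_B2 :
    v ∈ B2 A B ↔ v ∈ B ∧ #v = 3 ∧ ∑ a ∈ A, #(v ∩ a) = 2 ∧ #(neighbors A v) = 2 := mem_filter

lemma disjoint_B1_B2 : Disjoint (B1 A B) (B2 A B) :=
  disjoint_filter.2 fun v _ h1 h2 => by
    change #(neighbors A v) = 1 at h1
    change _ ∧ _ ∧ #(neighbors A v) = 2 at h2
    omega

lemma card_inter_eq_one_of_mem_B2 {a : Finset α} (hv : v ∈ B2 A B) (ha : a ∈ A)
    (hva : (v ∩ a).Nonempty) : #(v ∩ a) = 1 := by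
  obtain ⟨-, -, hsum, hcard⟩ := mem_B2.1 hv
  have hmem : a ∈ neighbors A v := mem_neighbors.2 ⟨ha, hva⟩
  have hrest := card_nsmul_le_sum ((neighbors A v).erase a) (fun b => #(v ∩ b)) 1
    fun b hb => card_pos.2 (mem_neighbors.1 (mem_of_mem_erase hb)).2
  have hneighbors : ∑ b ∈ A, #(v ∩ b) = ∑ b ∈ neighbors A v, #(v ∩ b) :=
    (sum_filter_of_ne fun b _ h => card_pos.1 (Nat.pos_of_ne_zero h)).symm
  rw [hneighbors, ← add_sum_erase _ _ hmem] at hsum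
  rw [card_erase_of_mem hmem, hcard, smul_eq_mul, mul_one] at hrest
  -- the other neighbour of `v` already contributes at least 1 to the total of 2
  have := card_pos.2 hva
  omega

end Classes

section Trim

variable (A U : Finset (Finset α))

noncomputable def trim (v : Finset α) : Finset α := v \ (A \ U).biUnion id

lemma trim_subset (v : Finset α) : trim A U v ⊆ v := sdiff_subset

variable {A U} {v : Finset α}

lemma disjoint_trim {a : Finset α} (ha : a ∈ A) (haU : a ∉ U) (v : Finset α) :
    Disjoint (trim A U v) a :=
  disjoint_sdiff_self_left.mono_right (subset_biUnion_of_mem id (mem_sdiff.2 ⟨ha, haU⟩))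

lemma trim_inter_of_mem (hA : (A : Set (Finset α)).PairwiseDisjoint id) {u : Finset α}
    (hu : u ∈ U) (hU : U ⊆ A) : trim A U v ∩ u = v ∩ u := by
  refine (inter_subset_inter_right (trim_subset A U v)).antisymm fun t ht => ?_
  rw [mem_inter] at ht ⊢
  refine ⟨mem_sdiff.2 ⟨ht.1, fun htD => ?_⟩, ht.2⟩
  obtain ⟨a, ha, hta⟩ := mem_biUnion.1 htD
  obtain ⟨haA, haU⟩ := mem_sdiff.1 ha
  exact haU (hA.elim_finset haA (hU hu) t hta ht.2 ▸ hu)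

lemma trim_eq_self (h : neighbors A v ⊆ U) : trim A U v = v := by
  refine sdiff_eq_self_of_disjoint (disjoint_left.2 fun t htv htD => ?_)
  obtain ⟨a, ha, hta⟩ := mem_biUnion.1 htD
  obtain ⟨haA, haU⟩ := mem_sdiff.1 ha
  exact haU (h (mem_neighbors.2 ⟨haA, t, mem_inter.2 ⟨htv, hta⟩⟩))

lemma card_trim_add_sum (hA : (A : Set (Finset α)).PairwiseDisjoint id) (v : Finset α) :
    #(trim A U v) + ∑ a ∈ A \ U, #(v ∩ a) = #v := by
  have hdisj : ((A \ U : Finset (Finset α)) : Set (Finset α)).PairwiseDisjoint (v ∩ ·) :=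
    (hA.subset (coe_subset.2 sdiff_subset)).mono fun a => inter_subset_right
  rw [trim, ← card_sdiff_add_card_inter v ((A \ U).biUnion id), inter_biUnion]
  exact congrArg _ (card_biUnion hdisj).symm

lemma nbhd_image_trim_subset (X : Finset (Finset α)) : nbhd (X.image (trim A U)) A ⊆ U := by
  intro a ha
  obtain ⟨haA, x, hx, hxa⟩ := mem_filter.1 ha
  obtain ⟨v, -, rfl⟩ := mem_image.1 hx
  by_contra haU
  exact hxa.not_disjoint (disjoint_trim haA haU v)

variable {B : Finset (Finset α)}

lemma trim_eq_self_of_mem_B1 (hU : U ⊆ A) (hv : v ∈ B1 A B) (hvU : (neighbors U v).Nonempty) :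
    trim A U v = v ∧ #(neighbors U v) = 1 := by
  have hcard := (mem_B1.1 hv).2
  have heq : neighbors U v = neighbors A v :=
    eq_of_subset_of_card_le (filter_subset_filter _ hU) (hcard ▸ card_pos.2 hvU)
  exact ⟨trim_eq_self (heq ▸ filter_subset _ _), heq ▸ hcard⟩

lemma card_trim_of_mem_B2 (hA : (A : Set (Finset α)).PairwiseDisjoint id) (hU : U ⊆ A)
    (hv : v ∈ B2 A B) : #(trim A U v) = #(neighbors U v) + 1 := by
  obtain ⟨-, h3, hsum, -⟩ := mem_B2.1 hv
  have hU_sum : ∑ u ∈ U, #(v ∩ u) = #(neighbors U v) := by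
    rw [neighbors, card_filter]
    refine sum_congr rfl fun u hu => ?_
    split_ifs with h
    · exact card_inter_eq_one_of_mem_B2 hv (hU hu) h
    · exact card_eq_zero.2 (not_nonempty_iff_eq_empty.1 h)
  have hsplit := sum_sdiff hU (f := fun a => #(v ∩ a))
  have htrim := card_trim_add_sum (U := U) hA v
  omega

end Trim

section Senders

variable (A B U : Finset (Finset α))

noncomputable def senders : Finset (Finset α) :=
  (B1 A B ∪ B2 A B).filter (fun v => (neighbors U v).Nonempty)

variable {A B U} {v : Finset α}

lemma mem_senders :
    v ∈ senders A B U ↔ (v ∈ B1 A B ∨ v ∈ B2 A B) ∧ (neighbors U v).Nonempty := by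
  rw [senders, mem_filter, mem_union]

lemma senders_subset : senders A B U ⊆ B := fun v hv => by
  rcases (mem_senders.1 hv).1 with h | h
  exacts [(mem_B1.1 h).1, (mem_B2.1 h).1]

lemma trim_mem_of_mem_senders {S : Finset (Finset α)}
    (hher : ∀ s ∈ S, s.card = 3 → ∀ t ⊆ s, t.card = 2 → t ∈ S) (hBS : B ⊆ S)
    (hA : (A : Set (Finset α)).PairwiseDisjoint id) (hU : U ⊆ A) (hv : v ∈ senders A B U) :
    trim A U v ∈ S := by
  obtain ⟨h1 | h2, hvU⟩ := mem_senders.1 hv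
  · rw [(trim_eq_self_of_mem_B1 hU h1 hvU).1]
    exact hBS (mem_B1.1 h1).1
  · obtain ⟨hvB, h3, -, -⟩ := mem_B2.1 h2
    refine mem_of_subset_of_two_le_card hher (hBS hvB) h3 (trim_subset A U v) ?_
    rw [card_trim_of_mem_B2 hA hU h2]
    have := card_pos.2 hvU
    omega

lemma exists_inter_trim_nonempty (hA : (A : Set (Finset α)).PairwiseDisjoint id)
    (hU : U ⊆ A) (hv : v ∈ senders A B U) : ∃ u ∈ U, (trim A U v ∩ u).Nonempty := by
  obtain ⟨u, hu⟩ := (mem_senders.1 hv).2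
  obtain ⟨huU, hvu⟩ := mem_neighbors.1 hu
  exact ⟨u, huU, by rwa [trim_inter_of_mem hA huU hU]⟩

lemma injOn_trim (hA : (A : Set (Finset α)).PairwiseDisjoint id)
    (hB : (B : Set (Finset α)).PairwiseDisjoint id) (hU : U ⊆ A) :
    Set.InjOn (trim A U) (senders A B U) := by
  intro v hv w hw hvw
  obtain ⟨_, -, t, ht⟩ := exists_inter_trim_nonempty hA hU hv
  have htv := trim_subset A U v (mem_inter.1 ht).1
  have htw := trim_subset A U w (hvw ▸ (mem_inter.1 ht).1)
  exact hB.elim_finset (senders_subset hv) (senders_subset hw) t htv htw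

lemma pairwiseDisjoint_image_trim (hB : (B : Set (Finset α)).PairwiseDisjoint id) :
    (((senders A B U).image (trim A U) : Finset (Finset α)) : Set (Finset α)).PairwiseDisjoint
      id := by
  rw [coe_image]
  exact (hB.subset (coe_subset.2 senders_subset)).image_of_le fun v => trim_subset A U v

lemma sum_wt_trim_senders (hA : (A : Set (Finset α)).PairwiseDisjoint id) (hU : U ⊆ A) :
    ∑ v ∈ senders A B U, wt (trim A U v) = ∑ u ∈ U, received A B u := by
  rw [sum_received, senders, filter_union, sum_union (disjoint_filter_filter disjoint_B1_B2)]
  congr 1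
  · rw [← sum_filter_of_ne (p := fun v => (neighbors U v).Nonempty)
      fun v _ h => card_pos.1 (Nat.pos_of_ne_zero (left_ne_zero_of_mul h))]
    refine sum_congr rfl fun v hv => ?_
    obtain ⟨hvB1, hvU⟩ := mem_filter.1 hv
    obtain ⟨htrim, hcard⟩ := trim_eq_self_of_mem_B1 hU hvB1 hvU
    rw [htrim, hcard, one_mul]
  · rw [← sum_filter_of_ne (p := fun v => (neighbors U v).Nonempty)
      fun v _ h => card_pos.1 (Nat.pos_of_ne_zero h)]
    refine sum_congr rfl fun v hv => ?_
    rw [wt, card_trim_of_mem_B2 hA hU (mem_filter.1 hv).1, Nat.add_sub_cancel]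

end Senders

end SetPacking

theorem first_step_representation_general {α : Type*} (S A B : Finset (Finset α))
    (hcards : ∀ s ∈ S, s.card = 2 ∨ s.card = 3)
    (hher : ∀ s ∈ S, s.card = 3 → ∀ t ⊆ s, t.card = 2 → t ∈ S)
    (hAS : A ⊆ S) (hBS : B ⊆ S)
    (hAdisj : PairwiseDisjointSets A) (hBdisj : PairwiseDisjointSets B) :
    ∀ U ⊆ A, ∃ X : Finset (Finset α), X ⊆ S ∧ PairwiseDisjointSets X ∧
      nbhd X A ⊆ U ∧ (∀ x ∈ X, ∃ u ∈ U, (x ∩ u).Nonempty) ∧ X.card ≤ 3 * U.card ∧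
      (∃ f : Finset α → Finset α, Set.InjOn f ↑X ∧
        ∀ x ∈ X, f x ∈ B1 A B ∪ B2 A B ∧ x ⊆ f x) ∧
      wsum X = ∑ u ∈ U, received A B u := by
  intro U hU
  rw [pairwiseDisjointSets_iff] at hAdisj hBdisj
  have hdisj := pairwiseDisjoint_image_trim (A := A) (U := U) hBdisj
  have hmeet : ∀ x ∈ (senders A B U).image (trim A U), ∃ u ∈ U, (x ∩ u).Nonempty :=
    forall_mem_image.2 fun v hv => exists_inter_trim_nonempty hAdisj hU hv
  refine ⟨(senders A B U).image (trim A U),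
    image_subset_iff.2 fun v hv => trim_mem_of_mem_senders hher hBS hAdisj hU hv,
    pairwiseDisjointSets_iff.2 hdisj, nbhd_image_trim_subset _, hmeet, ?_, ?_, ?_⟩
  · calc #((senders A B U).image (trim A U))
        _ ≤ #(U.biUnion id) := card_le_card_biUnion_of_forall_inter_nonempty hdisj hmeet
        _ ≤ #U * 3 := card_biUnion_le_card_mul _ _ _ fun u hu => by
          rcases hcards u (hAS (hU hu)) with h | h <;> simp [h]
        _ = 3 * #U := mul_comm _ _
  · obtain ⟨f, hinj, hf⟩ := exists_injOn_inverse_on_image (trim A U) (senders A B U)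
    refine ⟨f, hinj, fun x hx => ⟨?_, ?_⟩⟩
    · exact (mem_filter.1 (hf x hx).1).1
    · have := trim_subset A U (f x)
      rwa [(hf x hx).2] at this
  · rw [wsum, sum_image (injOn_trim hAdisj hBdisj hU), sum_wt_trim_senders hAdisj hU]

/-- Hereditary 2-3-Set Packing instance `S`, solution `A` with no
local improvement of size at most 10, optimum solution `B`, `A ∩ B = ∅`.  For each
`U ⊆ A` there is a collection `X ⊆ S` of pairwise disjoint sets such that
(i) `N(X, A) ⊆ U` and every set of `X` intersects a set of `U` (hence `|X| ≤ 3|U|`);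
(ii) there is an injective map `f : X → B₁ ∪ B₂` with `x ⊆ f x` for all `x ∈ X`;
(iii) `w(X)` equals the total amount that `U` receives in the first
weight-distribution step. -/
theorem first_step_representation {α : Type*} (S A B : Finset (Finset α))
    (hcards : ∀ s ∈ S, s.card = 2 ∨ s.card = 3)
    (hher : ∀ s ∈ S, s.card = 3 → ∀ t ⊆ s, t.card = 2 → t ∈ S)
    (hAS : A ⊆ S) (hBS : B ⊆ S)
    (hAdisj : PairwiseDisjointSets A) (hBdisj : PairwiseDisjointSets B)
    (hAB : Disjoint A B)
    (hBopt : ∀ X ⊆ S, PairwiseDisjointSets X → wsum X ≤ wsum B)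
    (hnoimp : ∀ X ⊆ S, X.card ≤ 10 → ¬ IsLocalImprovement A X) :
    ∀ U ⊆ A, ∃ X : Finset (Finset α), X ⊆ S ∧ PairwiseDisjointSets X ∧
      nbhd X A ⊆ U ∧ (∀ x ∈ X, ∃ u ∈ U, (x ∩ u).Nonempty) ∧ X.card ≤ 3 * U.card ∧
      (∃ f : Finset α → Finset α, Set.InjOn f ↑X ∧
        ∀ x ∈ X, f x ∈ B1 A B ∪ B2 A B ∧ x ⊆ f x) ∧
      wsum X = ∑ u ∈ U, received A B u :=
  first_step_representation_general S A B hcards hher hAS hBS hAdisj hBdisj
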